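/- Let n ≥ 1, ν > 0, T > 0, and let bⱼ : [0,T]×ℝⁿ → ℝ (1 ≤ j ≤ n) and c_{ij} : [0,T]×ℝⁿ → ℝ (1 ≤ i,j ≤ n) be bounded continuous functions. Suppose w = (w₁,…,wₙ) : [0,T]×ℝⁿ → ℝⁿ is bounded and continuous, each wᵢ has a time derivative for t ∈ (0,T) and continuous bounded first and second spatial derivatives, and w satisfies the linear parabolic system ∂wᵢ/∂t − ν Σ_{j=1}^n ∂²wᵢ/∂xⱼ² + Σ_{j=1}^n bⱼ ∂wᵢ/∂xⱼ + Σ_{j=1}^n c_{ij} wⱼ = 0 for all 1 ≤ i ≤ n, together with the zero initial condition w(0,·) = 0. Then w ≡ 0 on [0,T]×ℝⁿ. -/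

import Mathlib

open Set

noncomputable section

abbrev E (n : ℕ) := EuclideanSpace ℝ (Fin n)

/-- Partial derivative of `f` in the `j`-th coordinate direction. -/
noncomputable def pd {n : ℕ} (f : E n → ℝ) (j : Fin n) (x : E n) : ℝ :=
  fderiv ℝ f x (EuclideanSpace.single j 1)

/-!
A bounded subsolution of `∂ₜu − νΔu + b·∇u ≤ 0` with `u(0,·) ≤ 0` is `≤ 0`: the function
`u − ε e^{λt} (1 + ‖x‖²)` attains its maximum over `[0,t₁] × ℝⁿ`, and at a positive maximum with
`t₀ > 0` we have `∂ₜu ≥ λB(1 + ‖x‖²)`, `∇u = 2Bx`, `Δu ≤ 2nB` (with `B = ε e^{λt₀}`), which makes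
the operator positive once `λ > n‖b‖∞ + 2νn`; then let `ε → 0`.
Applied to `±wᵢ − g`, this bounds `|wᵢ| ≤ g` whenever `|Σⱼ cᵢⱼ wⱼ| ≤ g'` and `g(0) = 0`. Starting
from `|w| ≤ M` and iterating gives `|w(t)| ≤ M (C t)ᵏ / k!` with `C = n‖c‖∞`, which tends to `0`.
-/

open Filter Topology

lemma deriv_nonneg_of_isMaxOn_Icc {f : ℝ → ℝ} {a b : ℝ} (hab : a < b)
    (hf : DifferentiableAt ℝ f b) (h : IsMaxOn f (Icc a b) b) : 0 ≤ deriv f b := by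
  have hseg : segment ℝ b (b + (a - b)) ⊆ Icc a b := by
    rw [add_sub_cancel, segment_symm, segment_eq_Icc hab.le]
  have := h.localize.hasFDerivWithinAt_nonpos hf.hasDerivAt.hasFDerivAt.hasFDerivWithinAt
    (mem_posTangentConeAt_of_segment_subset hseg)
  simp only [ContinuousLinearMap.toSpanSingleton_apply, smul_eq_mul] at this
  nlinarith

lemma IsLocalMax.deriv_deriv_nonpos {g : ℝ → ℝ} {a : ℝ} (h : IsLocalMax g a)
    (hc : ContinuousAt g a) : deriv (deriv g) a ≤ 0 := by
  -- otherwise the second derivative test makes `a` a local minimum too, so `g` is locally constant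
  by_contra! hpos
  have hmin := isLocalMin_of_deriv_deriv_pos hpos h.deriv_eq_zero hc
  have hconst : g =ᶠ[𝓝 a] fun _ => g a := (hmin.and h).mono fun _ hx => le_antisymm hx.2 hx.1
  have := hconst.deriv.deriv_eq
  simp_all

lemma abs_sum_le_card_mul {ι : Type*} [Fintype ι] {f : ι → ℝ} {C : ℝ} (h : ∀ i, |f i| ≤ C) :
    |∑ i, f i| ≤ Fintype.card ι * C :=
  (Finset.abs_sum_le_sum_abs _ _).trans <| (Finset.sum_le_sum fun i _ => h i).trans (by simp)

lemma abs_sum_mul_le_card_mul {ι : Type*} [Fintype ι] {c w : ι → ℝ} {A B : ℝ} (hA : 0 ≤ A)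
    (hc : ∀ i, |c i| ≤ A) (hw : ∀ i, |w i| ≤ B) : |∑ i, c i * w i| ≤ Fintype.card ι * (A * B) :=
  abs_sum_le_card_mul fun i => (abs_mul _ _).trans_le (mul_le_mul (hc i) (hw i) (abs_nonneg _) hA)

lemma exists_isMaxOn_Icc_prod_of_le_sub_sq {F : Type*} [NormedAddCommGroup F] [ProperSpace F]
    {ψ : ℝ × F → ℝ} {a b M ε : ℝ} (hab : a ≤ b) (hε : 0 < ε)
    (hψc : ContinuousOn ψ (Icc a b ×ˢ univ))
    (hψ : ∀ p ∈ Icc a b ×ˢ univ, ψ p ≤ M - ε * ‖p.2‖ ^ 2) :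
    ∃ p ∈ Icc a b ×ˢ univ, IsMaxOn ψ (Icc a b ×ˢ univ) p := by
  have ha : ((a, 0) : ℝ × F) ∈ Icc a b ×ˢ univ := ⟨left_mem_Icc.2 hab, mem_univ _⟩
  refine hψc.exists_isMaxOn' (isClosed_Icc.prod isClosed_univ) ha ?_
  -- beyond norm `R`, a point of the strip has `ε ‖p.2‖² > M - ψ (a, 0)`
  set R := max (max |a| |b|) (max 1 ((M - ψ (a, 0)) / ε))
  have hfar := (tendsto_norm_cocompact_atTop (E := ℝ × F)).eventually_gt_atTop R
  filter_upwards [hfar.filter_mono inf_le_left, mem_inf_of_right (mem_principal_self _)]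
    with p hpR hp
  have h1 : ‖p.1‖ ≤ max |a| |b| := abs_le_max_abs_abs hp.1.1 hp.1.2
  have h2 : R < ‖p.2‖ := by
    rw [Prod.norm_def] at hpR
    exact (lt_max_iff.1 hpR).resolve_left fun h => by
      linarith [le_max_left (max |a| |b|) (max 1 ((M - ψ (a, 0)) / ε))]
  have h3 : 1 < ‖p.2‖ := lt_of_le_of_lt (le_max_left _ _ |>.trans (le_max_right _ _)) h2
  have h4 : (M - ψ (a, 0)) / ε < ‖p.2‖ :=
    lt_of_le_of_lt (le_max_right _ _ |>.trans (le_max_right _ _)) h2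
  rw [div_lt_iff₀ hε] at h4
  nlinarith [hψ p hp, mul_nonneg (mul_pos hε (sub_pos.2 h3)).le (norm_nonneg p.2)]

open Nat in
lemma hasDerivAt_mul_pow_div_factorial (M C t : ℝ) (k : ℕ) :
    HasDerivAt (fun s => M * (C * s) ^ (k + 1) / (k + 1)!) (C * (M * (C * t) ^ k / k !)) t := by
  refine (((hasDerivAt_id t).const_mul C).pow (k + 1) |>.const_mul M |>.div_const _).congr_deriv ?_
  rw [Nat.factorial_succ]
  push_cast
  field_simp
  simp

section

variable {n : ℕ}

lemma pd_const_mul (σ : ℝ) (f : E n → ℝ) (j : Fin n) :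
    pd (fun y => σ * f y) j = fun y => σ * pd f j y := by
  ext y
  have : (fun y => σ * f y) = σ • f := rfl
  simp [pd, this, fderiv_const_smul_field]

lemma pd_const_mul_sub_const (σ c : ℝ) (f : E n → ℝ) (j : Fin n) :
    pd (fun y => σ * f y - c) j = fun y => σ * pd f j y := by
  rw [← pd_const_mul]
  ext y
  simp only [pd]
  rw [fderiv_sub_const]

lemma pd_sub {f g : E n → ℝ} (hf : Differentiable ℝ f) (hg : Differentiable ℝ g) (j : Fin n) :
    pd (fun y => f y - g y) j = fun y => pd f j y - pd g j y := by
  ext y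
  simp [pd, fderiv_fun_sub (hf y) (hg y)]

lemma pd_coord (j : Fin n) (x : E n) : pd (fun y : E n => y j) j x = 1 := by
  have h : fderiv ℝ (fun y : E n => y j) x = EuclideanSpace.proj j :=
    (EuclideanSpace.proj (𝕜 := ℝ) (ι := Fin n) j).hasFDerivAt.fderiv
  simp [pd, h]

lemma pd_norm_sq (j : Fin n) : pd (fun x : E n => ‖x‖ ^ 2) j = fun x => 2 * x j := by
  ext x
  simp [pd, EuclideanSpace.inner_single_right]

lemma differentiable_coord (j : Fin n) : Differentiable ℝ (fun y : E n => y j) :=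
  (EuclideanSpace.proj (𝕜 := ℝ) (ι := Fin n) j).differentiable

lemma two_mul_abs_coord_le (x : E n) (j : Fin n) : 2 * |x j| ≤ 1 + ‖x‖ ^ 2 := by
  have hj : |x j| ≤ ‖x‖ := by simpa using PiLp.norm_apply_le x j
  nlinarith [sq_nonneg (‖x‖ - 1), abs_nonneg (x j)]

lemma IsLocalMax.pd_eq_zero {f : E n → ℝ} {x₀ : E n} (h : IsLocalMax f x₀) (j : Fin n) :
    pd f j x₀ = 0 := by
  simp [pd, h.fderiv_eq_zero]

lemma IsLocalMax.pd_pd_nonpos {f : E n → ℝ} {x₀ : E n} (h : IsLocalMax f x₀)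
    (hf : Differentiable ℝ f) (j : Fin n) (hf' : DifferentiableAt ℝ (pd f j) x₀) :
    pd (pd f j) j x₀ ≤ 0 := by
  set v : E n := EuclideanSpace.single j 1
  have hline : ∀ s : ℝ, HasDerivAt (fun s : ℝ => x₀ + s • v) v s := fun s => by
    simpa using ((hasDerivAt_id s).smul_const v).const_add x₀
  have hderiv : deriv (fun s : ℝ => f (x₀ + s • v)) = fun s => pd f j (x₀ + s • v) :=
    funext fun s => ((hf _).hasFDerivAt.comp_hasDerivAt s (hline s)).deriv
  have hmax : IsLocalMax (fun s : ℝ => f (x₀ + s • v)) 0 := by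
    refine IsLocalMax.comp_continuous ?_ (hline 0).continuousAt
    simpa using h
  have h2 := hmax.deriv_deriv_nonpos (hf.continuous.continuousAt.comp (hline 0).continuousAt)
  have hf'0 : DifferentiableAt ℝ (pd f j) (x₀ + (0 : ℝ) • v) := by simpa using hf'
  have h3 := hf'0.hasFDerivAt.comp_hasDerivAt (0 : ℝ) (hline 0)
  rw [zero_smul, add_zero] at h3
  rwa [hderiv, ← Function.comp_def, h3.deriv] at h2

lemma IsLocalMax.pd_eq_and_pd_pd_le_of_sub_norm_sq {u : E n → ℝ} {x₀ : E n} {B : ℝ}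
    (h : IsLocalMax (fun x => u x - B * ‖x‖ ^ 2) x₀) (hu : Differentiable ℝ u) (j : Fin n)
    (hu' : Differentiable ℝ (pd u j)) :
    pd u j x₀ = B * (2 * x₀ j) ∧ pd (pd u j) j x₀ ≤ 2 * B := by
  have hsq : Differentiable ℝ fun x : E n => B * ‖x‖ ^ 2 :=
    (differentiable_id.norm_sq ℝ).const_mul B
  have hlin : Differentiable ℝ fun x : E n => B * (2 * x j) :=
    (differentiable_coord j).const_mul 2 |>.const_mul B
  have hpd : pd (fun x => u x - B * ‖x‖ ^ 2) j = fun y => pd u j y - B * (2 * y j) := by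
    rw [pd_sub hu hsq, pd_const_mul, pd_norm_sq]
  have hpdpd : pd (pd (fun x => u x - B * ‖x‖ ^ 2) j) j x₀ = pd (pd u j) j x₀ - 2 * B := by
    simp only [hpd, pd_sub hu' hlin, pd_const_mul, pd_coord]
    ring
  have h1 := h.pd_eq_zero j
  have h2 := h.pd_pd_nonpos (hu.sub hsq) j (by rw [hpd]; exact (hu'.sub hlin) x₀)
  rw [hpd] at h1
  rw [hpdpd] at h2
  constructor <;> linarith

def parabolicOp (ν : ℝ) (b : Fin n → ℝ → E n → ℝ) (u : ℝ → E n → ℝ) (t : ℝ) (x : E n) : ℝ :=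
  deriv (fun s => u s x) t - ν * ∑ j, pd (pd (u t) j) j x + ∑ j, b j t x * pd (u t) j x

lemma parabolicOp_pos_of_isMaxOn {ν lam Mb ε t₀ t₁ : ℝ} {b : Fin n → ℝ → E n → ℝ}
    {u : ℝ → E n → ℝ} {x₀ : E n} (hν : 0 ≤ ν) (hb : ∀ j x, |b j t₀ x| ≤ Mb)
    (hlam : n * Mb + 2 * ν * n < lam) (hε : 0 < ε) (ht₀ : t₀ ∈ Ioc 0 t₁)
    (hmax : IsMaxOn (fun p : ℝ × E n => u p.1 p.2 - ε * Real.exp (lam * p.1) * (1 + ‖p.2‖ ^ 2))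
      (Icc 0 t₁ ×ˢ univ) (t₀, x₀))
    (hut : DifferentiableAt ℝ (fun s => u s x₀) t₀) (hux : Differentiable ℝ (u t₀))
    (hux' : ∀ j, Differentiable ℝ (pd (u t₀) j)) :
    0 < parabolicOp ν b u t₀ x₀ := by
  obtain ⟨B, hBdef⟩ : ∃ B, ε * Real.exp (lam * t₀) = B := ⟨_, rfl⟩
  have hB : 0 < B := hBdef ▸ by positivity
  have htime : lam * B * (1 + ‖x₀‖ ^ 2) ≤ deriv (fun s => u s x₀) t₀ := by
    have hbarrier : HasDerivAt (fun s => ε * Real.exp (lam * s) * (1 + ‖x₀‖ ^ 2))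
        (lam * B * (1 + ‖x₀‖ ^ 2)) t₀ := by
      refine ((((hasDerivAt_id t₀).const_mul lam).exp.const_mul ε).mul_const
        (1 + ‖x₀‖ ^ 2)).congr_deriv ?_
      rw [← hBdef, id, mul_one]
      ring
    have hmax_t : IsMaxOn (fun s => u s x₀ - ε * Real.exp (lam * s) * (1 + ‖x₀‖ ^ 2))
        (Icc 0 t₀) t₀ := fun s hs =>
      isMaxOn_iff.1 hmax (s, x₀) ⟨⟨hs.1, hs.2.trans ht₀.2⟩, mem_univ _⟩
    have := deriv_nonneg_of_isMaxOn_Icc ht₀.1 (hut.fun_sub hbarrier.differentiableAt) hmax_t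
    rw [deriv_fun_sub hut hbarrier.differentiableAt, hbarrier.deriv] at this
    linarith
  have hspace : IsLocalMax (fun x => u t₀ x - B * ‖x‖ ^ 2) x₀ :=
    Eventually.of_forall fun x => by
      have := isMaxOn_iff.1 hmax (t₀, x) ⟨⟨ht₀.1.le, ht₀.2⟩, mem_univ x⟩
      dsimp only at this ⊢
      rw [hBdef] at this
      linarith
  have hpd j := hspace.pd_eq_and_pd_pd_le_of_sub_norm_sq hux j (hux' j)
  have hlap : ∑ j, pd (pd (u t₀) j) j x₀ ≤ n * (2 * B) :=
    (Finset.sum_le_sum fun j _ => (hpd j).2).trans (by simp)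
  have hdrift : -(n * (Mb * (B * (1 + ‖x₀‖ ^ 2)))) ≤ ∑ j, b j t₀ x₀ * pd (u t₀) j x₀ := by
    refine neg_le_of_abs_le ((abs_sum_le_card_mul (C := Mb * (B * (1 + ‖x₀‖ ^ 2))) fun j => ?_).trans (by simp))
    rw [(hpd j).1, abs_mul, abs_mul B, abs_of_pos hB, abs_mul, abs_two]
    exact mul_le_mul (hb j x₀) (by nlinarith [two_mul_abs_coord_le x₀ j]) (by positivity)
      ((abs_nonneg _).trans (hb j x₀))
  have hq : 0 ≤ ‖x₀‖ ^ 2 := by positivity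
  have hνn : 0 ≤ ν * n := mul_nonneg hν n.cast_nonneg
  unfold parabolicOp
  nlinarith [mul_le_mul_of_nonneg_left hlap hν, mul_pos hB (by linarith : 0 < lam - n * Mb - 2 * ν * n),
    mul_nonneg (mul_nonneg hB.le hq) (by nlinarith : (0:ℝ) ≤ lam - n * Mb)]

variable {ν T Mb Mu : ℝ} {b : Fin n → ℝ → E n → ℝ} {u : ℝ → E n → ℝ}

lemma le_barrier_of_parabolicOp_nonpos {lam : ℝ} (hν : 0 ≤ ν)
    (hb : ∀ j, ∀ t ∈ Ioo 0 T, ∀ x, |b j t x| ≤ Mb) (hub : ∀ t ∈ Icc 0 T, ∀ x, u t x ≤ Mu)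
    (huc : ContinuousOn (Function.uncurry u) (Icc 0 T ×ˢ univ))
    (hut : ∀ x, ∀ t ∈ Ioo 0 T, DifferentiableAt ℝ (fun s => u s x) t)
    (hux : ∀ t ∈ Ioo 0 T, Differentiable ℝ (u t) ∧ ∀ j, Differentiable ℝ (pd (u t) j))
    (hL : ∀ x, ∀ t ∈ Ioo 0 T, parabolicOp ν b u t x ≤ 0) (h0 : ∀ x, u 0 x ≤ 0)
    (hlam₀ : 0 ≤ lam) (hlam : n * Mb + 2 * ν * n < lam)
    {t₁ ε : ℝ} (ht₁ : t₁ ∈ Ico 0 T) (hε : 0 < ε) (x₁ : E n) :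
    u t₁ x₁ ≤ ε * Real.exp (lam * t₁) * (1 + ‖x₁‖ ^ 2) := by
  set ψ : ℝ × E n → ℝ := fun p => u p.1 p.2 - ε * Real.exp (lam * p.1) * (1 + ‖p.2‖ ^ 2)
  have hsub : Icc 0 t₁ ×ˢ univ ⊆ Icc 0 T ×ˢ (univ : Set (E n)) :=
    prod_mono (Icc_subset_Icc_right ht₁.2.le) subset_rfl
  have hψc : ContinuousOn ψ (Icc 0 t₁ ×ˢ univ) :=
    (huc.mono hsub).sub (by fun_prop)
  have hψ : ∀ p ∈ Icc 0 t₁ ×ˢ univ, ψ p ≤ Mu - ε * ‖p.2‖ ^ 2 := fun p hp => by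
    have hexp : 1 ≤ Real.exp (lam * p.1) := Real.one_le_exp (mul_nonneg hlam₀ hp.1.1)
    have := hub p.1 (hsub hp).1 p.2
    simp only [ψ]
    nlinarith [mul_le_mul_of_nonneg_left hexp hε.le, sq_nonneg ‖p.2‖]
  obtain ⟨⟨t₀, x₀⟩, hp₀, hmax⟩ := exists_isMaxOn_Icc_prod_of_le_sub_sq ht₁.1 hε hψc hψ
  by_contra! hpos
  have hψpos : 0 < ψ (t₀, x₀) :=
    (sub_pos.2 hpos).trans_le (isMaxOn_iff.1 hmax (t₁, x₁) ⟨right_mem_Icc.2 ht₁.1, mem_univ _⟩)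
  have ht₀ : t₀ ∈ Ioc 0 t₁ := by
    refine ⟨hp₀.1.1.lt_of_ne ?_, hp₀.1.2⟩
    rintro rfl
    have := h0 x₀
    simp only [ψ, mul_zero, Real.exp_zero, mul_one] at hψpos
    nlinarith [sq_nonneg ‖x₀‖]
  have ht₀T : t₀ ∈ Ioo 0 T := ⟨ht₀.1, ht₀.2.trans_lt ht₁.2⟩
  have := parabolicOp_pos_of_isMaxOn hν (fun j x => hb j t₀ ht₀T x) hlam hε ht₀ hmax
    (hut x₀ t₀ ht₀T) (hux t₀ ht₀T).1 (hux t₀ ht₀T).2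
  linarith [hL x₀ t₀ ht₀T]

theorem le_zero_of_parabolicOp_nonpos (hν : 0 ≤ ν)
    (hb : ∀ j, ∀ t ∈ Ioo 0 T, ∀ x, |b j t x| ≤ Mb) (hub : ∀ t ∈ Icc 0 T, ∀ x, u t x ≤ Mu)
    (huc : ContinuousOn (Function.uncurry u) (Icc 0 T ×ˢ univ))
    (hut : ∀ x, ∀ t ∈ Ioo 0 T, DifferentiableAt ℝ (fun s => u s x) t)
    (hux : ∀ t ∈ Ioo 0 T, Differentiable ℝ (u t) ∧ ∀ j, Differentiable ℝ (pd (u t) j))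
    (hL : ∀ x, ∀ t ∈ Ioo 0 T, parabolicOp ν b u t x ≤ 0) (h0 : ∀ x, u 0 x ≤ 0) :
    ∀ t ∈ Icc 0 T, ∀ x, u t x ≤ 0 := by
  -- `|Mb|` rather than `Mb` keeps `lam ≥ 0` when the bound on `b` is vacuous
  set lam := n * |Mb| + 2 * ν * n + 1
  have hlam₀ : 0 ≤ lam := by positivity
  have hb' j t ht x : |b j t x| ≤ |Mb| := (hb j t ht x).trans (le_abs_self Mb)
  have hlt : ∀ t ∈ Ico 0 T, ∀ x, u t x ≤ 0 := fun t ht x => by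
    refine le_of_forall_pos_le_add fun δ hδ => ?_
    have hK : 0 < Real.exp (lam * t) * (1 + ‖x‖ ^ 2) := by positivity
    have := le_barrier_of_parabolicOp_nonpos hν hb' hub huc hut hux hL h0 hlam₀
      (lt_add_one _) ht (div_pos hδ hK) x
    rwa [mul_assoc, div_mul_cancel₀ _ hK.ne', ← zero_add δ] at this
  -- `∂ₜu` is only available on `(0, T)`, so `t = T` is reached by continuity
  intro t ht x
  rcases ht.1.eq_or_lt with rfl | ht₀
  · exact h0 x
  have hclosed : IsClosed (Icc 0 T ∩ (fun s => u s x) ⁻¹' Iic 0) :=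
    (huc.comp (Continuous.prodMk_left x).continuousOn fun s hs => ⟨hs, mem_univ x⟩)
      |>.preimage_isClosed_of_isClosed isClosed_Icc isClosed_Iic
  have hIcc := hclosed.closure_subset_iff.2 fun s (hs : s ∈ Ico 0 T) =>
    ⟨Ico_subset_Icc_self hs, hlt s hs x⟩
  rw [closure_Ico (ht₀.trans_le ht.2).ne] at hIcc
  exact (hIcc ht).2

lemma parabolicOp_const_mul_sub (σ : ℝ) {g : ℝ → ℝ} {g' t : ℝ} {x : E n}
    (hut : DifferentiableAt ℝ (fun s => u s x) t) (hg : HasDerivAt g g' t) :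
    parabolicOp ν b (fun s y => σ * u s y - g s) t x = σ * parabolicOp ν b u t x - g' := by
  simp only [parabolicOp, pd_const_mul_sub_const, pd_const_mul]
  rw [deriv_fun_sub (hut.const_mul σ) hg.differentiableAt, deriv_const_mul _ hut, hg.deriv]
  simp only [mul_left_comm _ σ, ← Finset.mul_sum]
  ring

theorem abs_le_of_abs_parabolicOp_le (hν : 0 ≤ ν)
    (hb : ∀ j, ∀ t ∈ Ioo 0 T, ∀ x, |b j t x| ≤ Mb) (hub : ∀ t ∈ Icc 0 T, ∀ x, |u t x| ≤ Mu)
    (huc : ContinuousOn (Function.uncurry u) (Icc 0 T ×ˢ univ))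
    (hut : ∀ x, ∀ t ∈ Ioo 0 T, DifferentiableAt ℝ (fun s => u s x) t)
    (hux : ∀ t ∈ Ioo 0 T, Differentiable ℝ (u t) ∧ ∀ j, Differentiable ℝ (pd (u t) j))
    {g g' : ℝ → ℝ} (hg : ∀ t, HasDerivAt g (g' t) t)
    (hL : ∀ x, ∀ t ∈ Ioo 0 T, |parabolicOp ν b u t x| ≤ g' t) (h0 : ∀ x, |u 0 x| ≤ g 0) :
    ∀ t ∈ Icc 0 T, ∀ x, |u t x| ≤ g t := by
  have hgc : Continuous g := continuous_iff_continuousAt.2 fun t => (hg t).continuousAt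
  obtain ⟨Mg, hMg⟩ := (isCompact_Icc (a := 0) (b := T)).exists_bound_of_continuousOn hgc.continuousOn
  have hsigned (σ : ℝ) (hσ : |σ| = 1) : ∀ t ∈ Icc 0 T, ∀ x, σ * u t x - g t ≤ 0 := by
    have hσle (a : ℝ) : σ * a ≤ |a| := by simpa [abs_mul, hσ] using le_abs_self (σ * a)
    refine le_zero_of_parabolicOp_nonpos (Mu := Mu + Mg) hν hb
      (fun t ht x => by linarith [hσle (u t x), hub t ht x, neg_le_of_abs_le (hMg t ht)])
      ((continuousOn_const.mul huc).sub (hgc.comp_continuousOn continuousOn_fst))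
      (fun x t ht => ((hut x t ht).const_mul σ).sub (hg t).differentiableAt)
      (fun t ht => ⟨((hux t ht).1.const_mul σ).sub_const _, fun j => ?_⟩)
      (fun x t ht => ?_) (fun x => by linarith [hσle (u 0 x), h0 x])
    · rw [pd_const_mul_sub_const]
      exact ((hux t ht).2 j).const_mul σ
    · rw [parabolicOp_const_mul_sub σ (hut x t ht) (hg t)]
      linarith [hσle (parabolicOp ν b u t x), hL x t ht]
  intro t ht x
  exact abs_le'.2 ⟨by simpa using hsigned 1 (by simp) t ht x,
    by simpa using hsigned (-1) (by simp) t ht x⟩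

end

open Nat in
theorem statement_13_general (n : ℕ) (ν T : ℝ) (hν : 0 < ν)
    (b : Fin n → ℝ → E n → ℝ) (c : Fin n → Fin n → ℝ → E n → ℝ)
    (hb : ∃ M : ℝ, ∀ j, ∀ t ∈ Icc (0:ℝ) T, ∀ x, |b j t x| ≤ M)
    (hc : ∃ M : ℝ, ∀ i j, ∀ t ∈ Icc (0:ℝ) T, ∀ x, |c i j t x| ≤ M)
    (w : Fin n → ℝ → E n → ℝ)
    (hwb : ∃ M : ℝ, ∀ i, ∀ t ∈ Icc (0:ℝ) T, ∀ x, |w i t x| ≤ M)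
    (hwc : ∀ i, ContinuousOn (fun p : ℝ × E n => w i p.1 p.2) (Icc (0:ℝ) T ×ˢ univ))
    (hwt : ∀ i x, ∀ t ∈ Ioo (0:ℝ) T, DifferentiableAt ℝ (fun s => w i s x) t)
    (hwx : ∀ i, ∀ t ∈ Icc (0:ℝ) T, Differentiable ℝ (w i t) ∧ ∀ j,
      Differentiable ℝ (pd (w i t) j) ∧ Continuous (pd (w i t) j) ∧
      (∃ M : ℝ, ∀ x, |pd (w i t) j x| ≤ M) ∧
      ∀ k, Continuous (pd (pd (w i t) j) k) ∧ ∃ M : ℝ, ∀ x, |pd (pd (w i t) j) k x| ≤ M)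
    (heq : ∀ i x, ∀ t ∈ Ioo (0:ℝ) T,
      deriv (fun s => w i s x) t - ν * ∑ j, pd (pd (w i t) j) j x
        + ∑ j, b j t x * pd (w i t) j x + ∑ j, c i j t x * w j t x = 0)
    (hinit : ∀ i x, w i 0 x = 0) :
    ∀ i, ∀ t ∈ Icc (0:ℝ) T, ∀ x, w i t x = 0 := by
  obtain ⟨Mb, hMb⟩ := hb
  obtain ⟨Mc, hMc⟩ := hc
  obtain ⟨Mw, hMw⟩ := hwb
  set C := n * max Mc 0
  have hbound (k : ℕ) : ∀ i, ∀ t ∈ Icc 0 T, ∀ x, |w i t x| ≤ Mw * (C * t) ^ k / k ! := by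
    induction k with
    | zero => simpa using hMw
    | succ k ih =>
      intro i
      have hwx' t (ht : t ∈ Ioo 0 T) := hwx i t (Ioo_subset_Icc_self ht)
      refine abs_le_of_abs_parabolicOp_le hν.le (fun j t ht => hMb j t (Ioo_subset_Icc_self ht))
        (hMw i) (hwc i) (hwt i) (fun t ht => ⟨(hwx' t ht).1, fun j => ((hwx' t ht).2 j).1⟩)
        (hasDerivAt_mul_pow_div_factorial Mw C · k) (fun x t ht => ?_) (fun x => by simp [hinit])
      have ht' := Ioo_subset_Icc_self ht
      rw [show parabolicOp ν b (w i) t x = -∑ j, c i j t x * w j t x by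
        unfold parabolicOp; linarith [heq i x t ht], abs_neg]
      refine (abs_sum_mul_le_card_mul (le_max_right Mc 0)
        (fun j => (hMc i j t ht' x).trans (le_max_left _ _)) fun j => ih j t ht' x).trans_eq ?_
      simp only [C, Fintype.card_fin]
      ring
  intro i t ht x
  have hlim : Tendsto (fun k : ℕ => Mw * (C * t) ^ k / k !) atTop (𝓝 0) := by
    simpa [mul_div_assoc] using (FloorSemiring.tendsto_pow_div_factorial_atTop (C * t)).const_mul Mw
  exact abs_nonpos_iff.1 <| ge_of_tendsto' hlim fun k => hbound k i t ht x

/-- Uniqueness for a linear parabolic system: a bounded classical solution `w` of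
`∂wᵢ/∂t − ν Δwᵢ + Σⱼ bⱼ ∂wᵢ/∂xⱼ + Σⱼ c_{ij} wⱼ = 0` on `[0,T]×ℝⁿ` with bounded
continuous coefficients and zero initial data vanishes identically. -/
theorem statement_13 (n : ℕ) (hn : 1 ≤ n) (ν T : ℝ) (hν : 0 < ν) (hT : 0 < T)
    (b : Fin n → ℝ → E n → ℝ) (c : Fin n → Fin n → ℝ → E n → ℝ)
    (hb : ∃ M : ℝ, ∀ j, ∀ t ∈ Icc (0:ℝ) T, ∀ x, |b j t x| ≤ M)
    (hbc : ∀ j, ContinuousOn (fun p : ℝ × E n => b j p.1 p.2) (Icc (0:ℝ) T ×ˢ univ))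
    (hc : ∃ M : ℝ, ∀ i j, ∀ t ∈ Icc (0:ℝ) T, ∀ x, |c i j t x| ≤ M)
    (hcc : ∀ i j, ContinuousOn (fun p : ℝ × E n => c i j p.1 p.2) (Icc (0:ℝ) T ×ˢ univ))
    (w : Fin n → ℝ → E n → ℝ)
    (hwb : ∃ M : ℝ, ∀ i, ∀ t ∈ Icc (0:ℝ) T, ∀ x, |w i t x| ≤ M)
    (hwc : ∀ i, ContinuousOn (fun p : ℝ × E n => w i p.1 p.2) (Icc (0:ℝ) T ×ˢ univ))
    (hwt : ∀ i x, ∀ t ∈ Ioo (0:ℝ) T, DifferentiableAt ℝ (fun s => w i s x) t)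
    (hwx : ∀ i, ∀ t ∈ Icc (0:ℝ) T, Differentiable ℝ (w i t) ∧ ∀ j,
      Differentiable ℝ (pd (w i t) j) ∧ Continuous (pd (w i t) j) ∧
      (∃ M : ℝ, ∀ x, |pd (w i t) j x| ≤ M) ∧
      ∀ k, Continuous (pd (pd (w i t) j) k) ∧ ∃ M : ℝ, ∀ x, |pd (pd (w i t) j) k x| ≤ M)
    (heq : ∀ i x, ∀ t ∈ Ioo (0:ℝ) T,
      deriv (fun s => w i s x) t - ν * ∑ j, pd (pd (w i t) j) j x
        + ∑ j, b j t x * pd (w i t) j x + ∑ j, c i j t x * w j t x = 0)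
    (hinit : ∀ i x, w i 0 x = 0) :
    ∀ i, ∀ t ∈ Icc (0:ℝ) T, ∀ x, w i t x = 0 :=
  statement_13_general n ν T hν b c hb hc w hwb hwc hwt hwx heq hinit
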